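/- Suppose a graph G is partitioned (by Baker's layering with parameter k and offset r) into overlapping induced subgraphs G_0, ..., G_t such that every vertex's demand is covered in some G_j, each G_j has treewidth at most k+1, and the sum over j of the optimal capacitated domination costs of the G_j is at most (1 + 4/k) * OPT(G). Then concatenating optimal solutions of the subgraphs yields a feasible capacitated dominating multiset of G with cost at most (1 + 4/k) * OPT(G). -/

import Mathlib

/-!
Demand is covered slab by slab, so whichever slab covers `d v` already serves it; loads and
costs are linear in `(x, f)`, so the slab bounds on them simply add up (soft capacities allow
multiplicities to add).
-/

/-- `G` has treewidth at most `w`: there is a tree decomposition of `G` all of whose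
bags have at most `w + 1` vertices. -/
def HasTreewidthLE {V : Type} (G : SimpleGraph V) (w : ℕ) : Prop :=
  ∃ (ι : Type) (T : SimpleGraph ι) (bag : ι → Finset V),
    T.IsTree ∧
    (∀ v : V, ∃ i, v ∈ bag i) ∧
    (∀ u v : V, G.Adj u v → ∃ i, u ∈ bag i ∧ v ∈ bag i) ∧
    (∀ v : V, (SimpleGraph.induce {i | v ∈ bag i} T).Connected) ∧
    (∀ i, (bag i).card ≤ w + 1)

open Finset

namespace SimpleGraph

variable {V ι : Type*} [DecidableEq V] (G : SimpleGraph V) [G.LocallyFinite]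

/-- `x v` is the multiplicity of `v` in the multiset and `f v u` the part of the demand of `v`
served by `u`; each copy of `v` serves at most `c v`. -/
def IsCapDomination (d c x : V → ℕ) (f : V → V → ℕ) : Prop :=
  (∀ v, d v ≤ ∑ u ∈ insert v (G.neighborFinset v), f v u) ∧
    ∀ v, ∑ u ∈ insert v (G.neighborFinset v), f u v ≤ c v * x v

variable {G}

theorem IsCapDomination.sum [Fintype ι] {d c : V → ℕ} {dj : ι → V → ℕ} {x : ι → V → ℕ}
    {f : ι → V → V → ℕ} (hdom : ∀ j, G.IsCapDomination (dj j) c (x j) (f j))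
    (hcover : ∀ v, ∃ j, d v ≤ dj j v) :
    G.IsCapDomination d c (∑ j, x j) (∑ j, f j) := by
  simp only [IsCapDomination, Finset.sum_apply]
  constructor
  · intro v
    obtain ⟨j, hj⟩ := hcover v
    calc d v ≤ dj j v := hj
      _ ≤ ∑ u ∈ insert v (G.neighborFinset v), f j v u := (hdom j).1 v
      _ ≤ ∑ u ∈ insert v (G.neighborFinset v), ∑ i, f i v u :=
          sum_le_sum fun u _ => single_le_sum (f := fun i => f i v u) (by simp) (mem_univ j)
  · intro v
    rw [sum_comm, mul_sum]
    exact sum_le_sum fun j _ => (hdom j).2 v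

end SimpleGraph

theorem sum_mul_natCast_sum {ι V R : Type*} [Fintype ι] [Fintype V] [NonAssocSemiring R]
    (w : V → R) (x : ι → V → ℕ) :
    ∑ v, w v * ((∑ j, x j v : ℕ) : R) = ∑ j, ∑ v, w v * (x j v : R) := by
  rw [sum_comm]
  simp only [Nat.cast_sum, mul_sum]

theorem stmt18_general {V : Type} [Fintype V] [DecidableEq V] (G : SimpleGraph V)
    [DecidableRel G.Adj]
    (d c w : V → ℕ) (k t : ℕ)
    (dj : Fin (t + 1) → V → ℕ)
    (x : Fin (t + 1) → V → ℕ) (f : Fin (t + 1) → V → V → ℕ)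
    (OPT : ℝ)
    (hcover : ∀ v : V, ∃ j, d v ≤ dj j v)
    (hfeas_dem : ∀ j v, dj j v ≤ ∑ u ∈ insert v (G.neighborFinset v), f j v u)
    (hfeas_cap : ∀ j v, ∑ u ∈ insert v (G.neighborFinset v), f j u v ≤ c v * x j v)
    (hcost : (∑ j, ∑ v, (w v : ℝ) * (x j v : ℝ)) ≤ (1 + 4 / (k : ℝ)) * OPT) :
    (∀ v, d v ≤ ∑ u ∈ insert v (G.neighborFinset v), ∑ j, f j v u) ∧
      (∀ v, (∑ u ∈ insert v (G.neighborFinset v), ∑ j, f j u v) ≤ c v * ∑ j, x j v) ∧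
      (∑ v, (w v : ℝ) * ((∑ j, x j v : ℕ) : ℝ)) ≤ (1 + 4 / (k : ℝ)) * OPT := by
  have hdom : G.IsCapDomination d c (∑ j, x j) (∑ j, f j) :=
    SimpleGraph.IsCapDomination.sum (fun j => ⟨hfeas_dem j, hfeas_cap j⟩) hcover
  simp only [SimpleGraph.IsCapDomination, Finset.sum_apply] at hdom
  exact ⟨hdom.1, hdom.2, (sum_mul_natCast_sum _ x).trans_le hcost⟩

/-- Baker layering: if each slab graph `G_j` (of treewidth at most
`k+1`) carries a feasible capacitated domination solution `(x j, f j)` for its slab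
demand `dj j`, every vertex's demand is covered in some slab, and the total cost of
the slab solutions is at most `(1 + 4/k) OPT`, then the concatenation
`(∑ j, x j, ∑ j, f j)` is a feasible capacitated dominating multiset of `G` of cost
at most `(1 + 4/k) OPT`. -/
theorem stmt18 {V : Type} [Fintype V] [DecidableEq V] (G : SimpleGraph V)
    [DecidableRel G.Adj]
    (d c w : V → ℕ) (k t : ℕ) (hk : 0 < k)
    (Vs : Fin (t + 1) → Set V)
    (dj : Fin (t + 1) → V → ℕ)
    (x : Fin (t + 1) → V → ℕ) (f : Fin (t + 1) → V → V → ℕ)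
    (OPT : ℝ) (hOPT : 0 ≤ OPT)
    (htw : ∀ j, HasTreewidthLE (SimpleGraph.induce (Vs j) G) (k + 1))
    (hsupp : ∀ j u v, f j u v ≠ 0 → u ∈ Vs j ∧ v ∈ Vs j)
    (hcover : ∀ v : V, ∃ j, d v ≤ dj j v)
    (hfeas_dem : ∀ j v, dj j v ≤ ∑ u ∈ insert v (G.neighborFinset v), f j v u)
    (hfeas_cap : ∀ j v, ∑ u ∈ insert v (G.neighborFinset v), f j u v ≤ c v * x j v)
    (hcost : (∑ j, ∑ v, (w v : ℝ) * (x j v : ℝ)) ≤ (1 + 4 / (k : ℝ)) * OPT) :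
    (∀ v, d v ≤ ∑ u ∈ insert v (G.neighborFinset v), ∑ j, f j v u) ∧
      (∀ v, (∑ u ∈ insert v (G.neighborFinset v), ∑ j, f j u v) ≤ c v * ∑ j, x j v) ∧
      (∑ v, (w v : ℝ) * ((∑ j, x j v : ℕ) : ℝ)) ≤ (1 + 4 / (k : ℝ)) * OPT :=
  stmt18_general G d c w k t dj x f OPT hcover hfeas_dem hfeas_cap hcost
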